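/- arXiv:1709.10350 — 3 statements merged into one kernel-verified Lean document; each statement's English description precedes it below -/
import Mathlib

section
/- Let F be a field of characteristic not 2 and let Ψ be an n×n matrix over F. If there exists a nonsingular skew-symmetric matrix M with MΨ symmetric, then the characteristic polynomial of Ψ satisfies χ_Ψ(x) = (-1)ⁿ χ_Ψ(-x). -/
open Matrix Polynomial

lemma charpoly_similar_aux {F : Type*} [Field F] {n : ℕ}
    (A B M : Matrix (Fin n) (Fin n) F) (hM : IsUnit M.det)
    (hc : M.map C * charmatrix A = charmatrix B * M.map C) :
    A.charpoly = B.charpoly := by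
  have hdet : IsUnit (M.map (C : F →+* F[X])).det := by
    rw [← RingHom.mapMatrix_apply, ← RingHom.map_det]
    exact hM.map _
  have := congrArg Matrix.det hc
  rw [Matrix.det_mul, Matrix.det_mul] at this
  unfold Matrix.charpoly
  exact hdet.mul_left_cancel (by rw [this, mul_comm])

lemma charpoly_transpose' {F : Type*} [Field F] {n : ℕ}
    (A : Matrix (Fin n) (Fin n) F) : Aᵀ.charpoly = A.charpoly := by
  unfold Matrix.charpoly
  rw [← Matrix.det_transpose (charmatrix A)]
  congr 1
  ext i j
  by_cases hij : i = j
  · subst hij; simp [charmatrix_apply_eq]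
  · simp [Matrix.transpose_apply, charmatrix_apply_ne _ _ _ hij,
      charmatrix_apply_ne _ _ _ (Ne.symm hij)]

lemma charpoly_neg' {F : Type*} [Field F] {n : ℕ}
    (A : Matrix (Fin n) (Fin n) F) :
    (-A).charpoly = (-1) ^ n * A.charpoly.comp (-Polynomial.X) := by
  have h1 : A.charpoly.comp (-X) =
      ((charmatrix A).map (eval₂RingHom (C : F →+* F[X]) (-X))).det := by
    rw [← RingHom.mapMatrix_apply, ← RingHom.map_det]
    rfl
  have h2 : (charmatrix A).map (eval₂RingHom (C : F →+* F[X]) (-X)) =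
      -(charmatrix (-A)) := by
    ext i j
    by_cases hij : i = j
    · subst hij
      simp [charmatrix_apply_eq]
      ring
    · simp [charmatrix_apply_ne _ _ _ hij]
  rw [h1, h2, Matrix.det_neg, Fintype.card_fin, ← mul_assoc, ← mul_pow]
  simp [Matrix.charpoly]

/-- If there exists a nonsingular skew-symmetric `M` with `M * Ψ` symmetric,
then the characteristic polynomial satisfies `χ_Ψ(x) = (-1)^n χ_Ψ(-x)`. -/
theorem stmt2 {F : Type*} [Field F] (h2 : (2 : F) ≠ 0) {n : ℕ}
    (Ψ : Matrix (Fin n) (Fin n) F)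
    (h : ∃ M : Matrix (Fin n) (Fin n) F, IsUnit M.det ∧ Mᵀ = -M ∧ (M * Ψ)ᵀ = M * Ψ) :
    Ψ.charpoly = (-1) ^ n * Ψ.charpoly.comp (-Polynomial.X) := by
  obtain ⟨M, hMdet, hskew, hsym⟩ := h
  -- MΨ = -ΨᵀM
  have key : Ψᵀ * M = -(M * Ψ) := by
    have h := (Matrix.transpose_mul M Ψ).symm
    rw [hsym, hskew, Matrix.mul_neg] at h
    rw [← h, neg_neg]
  have h1 : Ψ.charpoly = (-Ψᵀ).charpoly := by
    apply charpoly_similar_aux Ψ (-Ψᵀ) M hMdet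
    show C.mapMatrix M * charmatrix Ψ = charmatrix (-Ψᵀ) * C.mapMatrix M
    rw [charmatrix, charmatrix, map_neg, sub_neg_eq_add, mul_sub, add_mul,
      ← _root_.map_mul, ← _root_.map_mul, key, map_neg,
      ((Matrix.scalar_commute X (Commute.all X) (C.mapMatrix M)).eq)]
    abel
  calc Ψ.charpoly = (-Ψ).charpoly := by
        rw [h1, ← Matrix.transpose_neg, charpoly_transpose']
    _ = (-1) ^ n * Ψ.charpoly.comp (-Polynomial.X) := charpoly_neg' Ψ
end

section
/- Let Ψ be a nilpotent n×n matrix over a field F of characteristic not 2 with Ψⁿ = 0 and Ψ^{n-1} ≠ 0 (i.e., similar to a single nilpotent Jordan block), and suppose n is even. Then there exists a nonsingular skew-symmetric matrix M such that MΨ is symmetric. -/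
/-!
Pick a row vector `w` with `w Ψⁿ⁻¹ ≠ 0`. The rows `w, w Ψ, …, w Ψⁿ⁻¹` are linearly independent,
so they form an invertible `S` with `S Ψ = J S`, where `J` is the nilpotent Jordan block (the upper
shift). For `J` take the anti-diagonal `M₀` with alternating signs: it is skew-symmetric because
`n` is even, and `M₀ J` is supported on the anti-diagonal `i + j = n`, where `i ≡ j (mod 2)`, so it
is symmetric. Then `M = Sᵀ M₀ S` works for `Ψ`.
-/

open Matrix

theorem neg_one_pow_eq_neg_one_pow_add_mul {R : Type*} [Monoid R] [HasDistribNeg R] (a b : ℕ) :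
    (-1 : R) ^ a = (-1) ^ (a + b) * (-1) ^ b := by
  rw [pow_add, mul_assoc, ← pow_add, ← two_mul, pow_mul, neg_one_sq, one_pow, mul_one]

theorem Fin.neg_one_pow_val_rev {R : Type*} [Monoid R] [HasDistribNeg R] {n : ℕ} (hn : Even n)
    (i : Fin n) : (-1 : R) ^ (i.rev : ℕ) = -(-1) ^ (i : ℕ) := by
  have hodd : Odd ((i.rev : ℕ) + i) := by
    have := Fin.val_rev i
    rw [Nat.odd_iff]
    rw [Nat.even_iff] at hn
    omega
  rw [neg_one_pow_eq_neg_one_pow_add_mul _ i, hodd.neg_one_pow, neg_one_mul]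

theorem Module.End.linearIndependent_pow_apply {R V : Type*} [Ring R] [AddCommGroup V]
    [Module R V] [NoZeroSMulDivisors R V] {f : Module.End R V} {n : ℕ} {v : V}
    (hv : (f ^ n) v = 0) (hv' : (f ^ (n - 1)) v ≠ 0) :
    LinearIndependent R fun k : Fin n => (f ^ (k : ℕ)) v := by
  rw [Fintype.linearIndependent_iff]
  intro c hc
  by_contra! hne
  obtain ⟨i, hi, hmin⟩ := WellFounded.has_min wellFounded_lt {i | c i ≠ 0} hne
  -- Applying `f ^ (n - 1 - i)` kills every term but the `i`-th.
  have hsum : ∑ j : Fin n, c j • (f ^ (n - 1 - i + j)) v = 0 := by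
    simpa [pow_add, Module.End.mul_apply] using congrArg (f ^ (n - 1 - i)) hc
  rw [Finset.sum_eq_single i, Nat.sub_add_cancel (by omega)] at hsum
  · exact hv' ((eq_zero_or_eq_zero_of_smul_eq_zero hsum).resolve_left hi)
  · intro j _ hji
    rcases lt_or_gt_of_ne hji with hlt | hgt
    · rw [show c j = 0 from not_not.mp fun hj => hmin j hj hlt, zero_smul]
    · rw [pow_map_zero_of_le (by omega) hv, smul_zero]
  · simp

namespace Matrix

variable {R : Type*} {n : ℕ}

def IsSkewSymmetrizer {m : Type*} [Fintype m] [DecidableEq m] [CommRing R]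
    (M Ψ : Matrix m m R) : Prop :=
  IsUnit M.det ∧ Mᵀ = -M ∧ (M * Ψ)ᵀ = M * Ψ

theorem IsSkewSymmetrizer.transpose_mul_mul {m : Type*} [Fintype m] [DecidableEq m] [CommRing R]
    {M₀ Ψ₀ Ψ S : Matrix m m R} (h : IsSkewSymmetrizer M₀ Ψ₀) (hS : IsUnit S.det)
    (hSΨ : S * Ψ = Ψ₀ * S) : IsSkewSymmetrizer (Sᵀ * M₀ * S) Ψ := by
  obtain ⟨hdet, hskew, hsymm⟩ := h
  refine ⟨?_, ?_, ?_⟩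
  · simpa [det_mul, det_transpose] using (hS.mul hdet).mul hS
  · simp [transpose_mul, hskew, Matrix.mul_assoc]
  · have hconj : Sᵀ * M₀ * S * Ψ = Sᵀ * (M₀ * Ψ₀) * S := by
      rw [Matrix.mul_assoc, hSΨ, Matrix.mul_assoc, Matrix.mul_assoc, Matrix.mul_assoc]
    rw [hconj, transpose_mul, transpose_mul, transpose_transpose, hsymm, ← Matrix.mul_assoc]

def upperShift (R : Type*) [Zero R] [One R] (n : ℕ) : Matrix (Fin n) (Fin n) R :=
  of fun i j => if (i : ℕ) + 1 = j then 1 else 0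

def antidiagSign (R : Type*) [MonoidWithZero R] [HasDistribNeg R] (n : ℕ) :
    Matrix (Fin n) (Fin n) R :=
  of fun i j => if j = i.rev then (-1) ^ (i : ℕ) else 0

theorem upperShift_mul_apply [Semiring R] (A : Matrix (Fin n) (Fin n) R) (i j : Fin n) :
    (upperShift R n * A) i j = if h : (i : ℕ) + 1 < n then A ⟨i + 1, h⟩ j else 0 := by
  simp only [upperShift, mul_apply, of_apply, ite_mul, one_mul, zero_mul]
  split_ifs with h
  · rw [Finset.sum_eq_single ⟨i + 1, h⟩] <;> simp +contextual [Fin.ext_iff, eq_comm]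
  · exact Finset.sum_eq_zero fun k _ => if_neg (by omega)

theorem antidiagSign_mul_apply [Ring R] (A : Matrix (Fin n) (Fin n) R) (i j : Fin n) :
    (antidiagSign R n * A) i j = (-1) ^ (i : ℕ) * A i.rev j := by
  simp [antidiagSign, mul_apply, ite_mul]

theorem antidiagSign_mul_self [Ring R] (hn : Even n) :
    antidiagSign R n * antidiagSign R n = -1 := by
  ext i j
  rw [antidiagSign_mul_apply]
  simp only [antidiagSign, of_apply, Fin.rev_rev, Fin.neg_one_pow_val_rev hn, neg_apply, one_apply,
    eq_comm]
  split_ifs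
  · rw [mul_neg, ← pow_add, ← two_mul, pow_mul, neg_one_sq, one_pow]
  · rw [mul_zero, neg_zero]

theorem isUnit_det_antidiagSign [CommRing R] (hn : Even n) : IsUnit (antidiagSign R n).det :=
  IsUnit.of_mul_eq_one _ <| by
    rw [← det_mul, antidiagSign_mul_self hn, det_neg, det_one, Fintype.card_fin, hn.neg_one_pow,
      mul_one]

theorem transpose_antidiagSign [Ring R] (hn : Even n) :
    (antidiagSign R n)ᵀ = -antidiagSign R n := by
  ext i j
  have hrev : i = j.rev ↔ j = i.rev := by rw [eq_comm, Fin.rev_eq_iff]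
  simp only [transpose_apply, antidiagSign, of_apply, neg_apply, hrev]
  split_ifs with h
  · rw [h, Fin.neg_one_pow_val_rev hn]
  · rw [neg_zero]

theorem isSkewSymmetrizer_antidiagSign_upperShift [CommRing R] (hn : Even n) :
    IsSkewSymmetrizer (antidiagSign R n) (upperShift R n) := by
  refine ⟨isUnit_det_antidiagSign hn, transpose_antidiagSign hn, ?_⟩
  ext i j
  simp only [transpose_apply, antidiagSign_mul_apply, upperShift, of_apply, Fin.val_rev]
  by_cases h : (j : ℕ) + i = n
  · rw [if_pos (by omega), if_pos (by omega), neg_one_pow_eq_neg_one_pow_add_mul j i, h,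
      hn.neg_one_pow, one_mul]
  · rw [if_neg (by omega), if_neg (by omega), mul_zero, mul_zero]

theorem vecMulLinear_pow_apply {m : Type*} [Fintype m] [DecidableEq m] [CommSemiring R]
    (A : Matrix m m R) (k : ℕ) (w : m → R) : (A.vecMulLinear ^ k) w = w ᵥ* A ^ k := by
  induction k with
  | zero => simp
  | succ k ih =>
    rw [pow_succ', Module.End.mul_apply, ih, vecMulLinear_apply, vecMul_vecMul, pow_succ]

theorem exists_isUnit_det_mul_eq_upperShift_mul {K : Type*} [Field K]
    {Ψ : Matrix (Fin n) (Fin n) K} (hnil : Ψ ^ n = 0) (hne : Ψ ^ (n - 1) ≠ 0) :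
    ∃ S : Matrix (Fin n) (Fin n) K, IsUnit S.det ∧ S * Ψ = upperShift K n * S := by
  obtain ⟨w, hw⟩ : ∃ w, w ᵥ* Ψ ^ (n - 1) ≠ 0 := by simpa [ext_iff_vecMul] using hne
  set S : Matrix (Fin n) (Fin n) K := of fun k => w ᵥ* Ψ ^ (k : ℕ)
  have hS : ∀ k, S k = w ᵥ* Ψ ^ (k : ℕ) := fun _ => rfl
  refine ⟨S, ?_, ?_⟩
  · rw [← isUnit_iff_isUnit_det, ← linearIndependent_rows_iff_isUnit]
    have hrows : S.row = fun k : Fin n => (Ψ.vecMulLinear ^ (k : ℕ)) w :=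
      funext fun k => by rw [vecMulLinear_pow_apply, ← hS]; rfl
    rw [hrows]
    exact Module.End.linearIndependent_pow_apply
      (by rw [vecMulLinear_pow_apply, hnil, vecMul_zero]) (by rwa [vecMulLinear_pow_apply])
  · ext k l
    rw [mul_apply_eq_vecMul, upperShift_mul_apply, hS, vecMul_vecMul, ← pow_succ]
    split_ifs with hk
    · rw [hS]
    · rw [show (k : ℕ) + 1 = n by omega, hnil, vecMul_zero, Pi.zero_apply]

end Matrix

theorem stmt4_general {F : Type*} [Field F] {n : ℕ} (hn : Even n)
    (Ψ : Matrix (Fin n) (Fin n) F) (hnil : Ψ ^ n = 0) (hne : Ψ ^ (n - 1) ≠ 0) :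
    ∃ M : Matrix (Fin n) (Fin n) F, IsUnit M.det ∧ Mᵀ = -M ∧ (M * Ψ)ᵀ = M * Ψ := by
  obtain ⟨S, hS, hSΨ⟩ := exists_isUnit_det_mul_eq_upperShift_mul hnil hne
  exact ⟨_, (isSkewSymmetrizer_antidiagSign_upperShift hn).transpose_mul_mul hS hSΨ⟩

/-- If `Ψ` is similar to a single nilpotent Jordan block of even size `n`, then
there exists a nonsingular skew-symmetric `M` such that `M * Ψ` is symmetric. -/
theorem stmt4 {F : Type*} [Field F] (h2 : (2 : F) ≠ 0) {n : ℕ} (hn : Even n)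
    (Ψ : Matrix (Fin n) (Fin n) F) (hnil : Ψ ^ n = 0) (hne : Ψ ^ (n - 1) ≠ 0) :
    ∃ M : Matrix (Fin n) (Fin n) F, IsUnit M.det ∧ Mᵀ = -M ∧ (M * Ψ)ᵀ = M * Ψ :=
  stmt4_general hn Ψ hnil hne
end

section
/- Over a field F of characteristic not 2, the 2n×2n matrix -Ω_nP_n, where P_n is the symmetric matrix whose top-left n×n block is the anti-identity (ones on the anti-diagonal) and whose bottom-right n×n block has ones in positions (k, n+1-k) for k ≤ n-1 arranged as the shifted anti-diagonal with a zero corner (equivalently, -(-Ω_nP_n)² = J_n(0)ᵀ ⊕ J_n(0)), is nilpotent of rank 2n-1, hence similar to the single Jordan block J_{2n}(0). -/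
/-!
In the flattened basis `e_0, …, e_{2n-1}`, the matrix `N = -Ω_n P_n` sends `e_{n-1-k} ↦ e_{n+k}`,
`e_{n+k} ↦ -e_{n-k}` for `k ≥ 1`, and kills `e_n`. So
`e_0 ↦ e_{2n-1} ↦ -e_1 ↦ -e_{2n-2} ↦ e_2 ↦ ⋯ ↦ ±e_n ↦ 0` is a single Jordan chain running
through all `2n` basis vectors. The signed permutation matrix `S` whose columns are this chain,
read from its end, is orthogonal and satisfies `N S = S J_{2n}(0)`; nilpotency and rank `2n - 1`
are then inherited from the Jordan block.
-/

open Matrix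

/-- The standard symplectic matrix `Ω_n = [[0, I_n], [-I_n, 0]]`. -/
def Omega (F : Type*) [Field F] (n : ℕ) :
    Matrix (Fin n ⊕ Fin n) (Fin n ⊕ Fin n) F :=
  Matrix.fromBlocks 0 1 (-1) 0

/-- The symmetric block-diagonal matrix `P_n`: top-left block is the
anti-identity, bottom-right block is the shifted anti-diagonal with a zero
corner, chosen so that `-(-Ω_n P_n)² = J_n(0)ᵀ ⊕ J_n(0)`. -/
def Pmat (F : Type*) [Field F] (n : ℕ) :
    Matrix (Fin n ⊕ Fin n) (Fin n ⊕ Fin n) F :=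
  Matrix.fromBlocks
    (Matrix.of fun i j => if (i : ℕ) + (j : ℕ) + 1 = n then 1 else 0) 0 0
    (Matrix.of fun i j => if (i : ℕ) + (j : ℕ) = n then 1 else 0)

namespace Matrix

section NilpotentJordanBlock

variable (R : Type*)

def nilpotentJordanBlock [Zero R] [One R] (m : ℕ) : Matrix (Fin m) (Fin m) R :=
  of fun i j => if (i : ℕ) + 1 = j then 1 else 0

variable {R}

lemma mul_nilpotentJordanBlock_apply [NonAssocSemiring R] {l m : ℕ} (A : Matrix (Fin l) (Fin m) R)
    (i : Fin l) (j : Fin m) :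
    (A * nilpotentJordanBlock R m) i j = if h : 0 < (j : ℕ) then A i ⟨j - 1, by omega⟩ else 0 := by
  rw [mul_apply]
  split_ifs with hj
  · rw [Fintype.sum_eq_single ⟨j - 1, by omega⟩ fun k hk => ?_]
    · simp [nilpotentJordanBlock, show (j : ℕ) - 1 + 1 = j by omega]
    · have : (k : ℕ) + 1 ≠ j := fun h => hk (Fin.ext (by simp; omega))
      simp [nilpotentJordanBlock, this]
  · refine Finset.sum_eq_zero fun k _ => ?_
    simp [nilpotentJordanBlock, show (k : ℕ) + 1 ≠ j by omega]

lemma nilpotentJordanBlock_pow [Semiring R] (m k : ℕ) :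
    nilpotentJordanBlock R m ^ k = of fun i j : Fin m => if (i : ℕ) + k = j then 1 else 0 := by
  induction k with
  | zero => ext i j; simp [one_apply, Fin.ext_iff]
  | succ k ih =>
    ext i j
    rw [pow_succ, mul_nilpotentJordanBlock_apply, ih]
    simp only [of_apply]
    split_ifs <;> first | rfl | omega

lemma nilpotentJordanBlock_pow_self [Semiring R] (m : ℕ) : nilpotentJordanBlock R m ^ m = 0 := by
  ext i j
  have := j.isLt
  simp [nilpotentJordanBlock_pow, show (i : ℕ) + m ≠ j by omega]

lemma rank_nilpotentJordanBlock [Field R] (m : ℕ) : (nilpotentJordanBlock R m).rank = m - 1 := by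
  classical
  cases m with
  | zero => simp [Subsingleton.elim (nilpotentJordanBlock R 0) 0]
  | succ m =>
    have hdiag : (nilpotentJordanBlock R (m + 1)).submatrix id (finRotate (m + 1)) =
        diagonal fun k => if k = Fin.last m then 0 else 1 := by
      ext i k
      by_cases hk : k = Fin.last m
      · simp [nilpotentJordanBlock, hk, diagonal_apply]
      · have := Fin.val_lt_last hk
        simp only [nilpotentJordanBlock, submatrix_apply, id, diagonal_apply, of_apply, Fin.ext_iff,
          coe_finRotate_of_ne_last hk]
        split_ifs <;> first | rfl | omega
    rw [← rank_submatrix _ (Equiv.refl _) (finRotate (m + 1)), Equiv.coe_refl, hdiag, rank_diagonal]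
    simp

end NilpotentJordanBlock

section Similarity

variable {ι R : Type*} [Fintype ι] [DecidableEq ι] [CommRing R] {M J S : Matrix ι ι R}

lemma inv_mul_mul_eq_of_mul_eq_mul (hS : IsUnit S.det) (h : M * S = S * J) : S⁻¹ * M * S = J := by
  rw [mul_assoc, h, ← mul_assoc, nonsing_inv_mul _ hS, one_mul]

lemma isNilpotent_of_mul_eq_mul (hS : IsUnit S.det) (h : M * S = S * J) (hJ : IsNilpotent J) :
    IsNilpotent M := by
  obtain ⟨k, hk⟩ := hJ
  refine ⟨k, ?_⟩
  calc M ^ k = M ^ k * S * S⁻¹ := by rw [mul_assoc, mul_nonsing_inv _ hS, mul_one]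
    _ = 0 := by rw [← (SemiconjBy.pow_right h.symm k).eq, hk, mul_zero, zero_mul]

lemma rank_eq_of_mul_eq_mul (hS : IsUnit S.det) (h : M * S = S * J) : M.rank = J.rank := by
  rw [← inv_mul_mul_eq_of_mul_eq_mul hS h, rank_mul_eq_left_of_isUnit_det _ _ hS,
    rank_mul_eq_right_of_isUnit_det _ _ (isUnit_nonsing_inv_det S hS)]

end Similarity

end Matrix

def chainIndex (n : ℕ) : Fin (n + n) ≃ Fin (n + n) where
  toFun j := if (j : ℕ) % 2 = 0 then ⟨n + j / 2, by omega⟩ else ⟨n - 1 - j / 2, by omega⟩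
  invFun p := if (p : ℕ) < n then ⟨2 * (n - 1 - p) + 1, by omega⟩ else ⟨2 * (p - n), by omega⟩
  left_inv j := by
    by_cases h : (j : ℕ) % 2 = 0 <;> simp only [h, reduceIte] <;> split_ifs <;> ext <;> simp <;> omega
  right_inv p := by
    by_cases h : (p : ℕ) < n <;> simp only [h, reduceIte] <;> split_ifs <;> ext <;> simp <;> omega

lemma chainIndex_val (n : ℕ) (j : Fin (n + n)) :
    (chainIndex n j : ℕ) = if (j : ℕ) % 2 = 0 then n + j / 2 else n - 1 - j / 2 := by
  simp only [chainIndex, Equiv.coe_fn_mk]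
  split_ifs <;> rfl

def chainBasis (R : Type*) [Ring R] (n : ℕ) : Matrix (Fin (n + n)) (Fin (n + n)) R :=
  of fun p j => if p = chainIndex n j then (-1) ^ ((j : ℕ) / 2) else 0

lemma chainBasis_transpose_mul (R : Type*) [CommRing R] (n : ℕ) :
    (chainBasis R n)ᵀ * chainBasis R n = 1 := by
  ext i j
  by_cases h : i = j
  · subst h
    simp [chainBasis, mul_apply, ← pow_add, Even.neg_one_pow ⟨_, rfl⟩]
  · simp [chainBasis, mul_apply, one_apply, h, Ne.symm h]

lemma mul_chainBasis_apply {R : Type*} [Ring R] {m n : ℕ} (A : Matrix (Fin m) (Fin (n + n)) R)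
    (p : Fin m) (j : Fin (n + n)) :
    (A * chainBasis R n) p j = A p (chainIndex n j) * (-1) ^ ((j : ℕ) / 2) := by
  rw [mul_apply, Fintype.sum_eq_single (chainIndex n j) fun q hq => by simp [chainBasis, hq]]
  simp [chainBasis]

section NegOmegaMulPmat

variable (F : Type*) [Field F]

lemma reindex_neg_Omega_mul_Pmat (n : ℕ) :
    reindex finSumFinEquiv finSumFinEquiv (-(Omega F n * Pmat F n)) =
      of fun p q : Fin (n + n) =>
        if (p : ℕ) < n ∧ (p : ℕ) + q = 2 * n then -1
        else if n ≤ (p : ℕ) ∧ (p : ℕ) + q + 1 = 2 * n then 1 else 0 := by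
  rw [← Equiv.eq_symm_apply]
  ext (i | i) (j | j) <;> have := i.isLt <;> have := j.isLt <;>
    simp [Omega, Pmat, fromBlocks_multiply] <;> (try split_ifs) <;> (try simp) <;> omega

lemma reindex_neg_Omega_mul_Pmat_mul_chainBasis (n : ℕ) :
    reindex finSumFinEquiv finSumFinEquiv (-(Omega F n * Pmat F n)) * chainBasis F n =
      chainBasis F n * nilpotentJordanBlock F (n + n) := by
  ext p j
  have := p.isLt
  rw [mul_chainBasis_apply, mul_nilpotentJordanBlock_apply, reindex_neg_Omega_mul_Pmat]
  simp only [chainBasis, of_apply, Fin.ext_iff, chainIndex_val]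
  rcases Nat.even_or_odd' (j : ℕ) with ⟨k, hk | hk⟩
  · rcases k with _ | k
    · obtain ⟨h1, h2, h3⟩ : (j : ℕ) % 2 = 0 ∧ (j : ℕ) / 2 = 0 ∧ ¬0 < (j : ℕ) := by omega
      simp only [h1, h2, h3, dite_false, if_true]
      rw [if_neg (by omega), if_neg (by omega), zero_mul]
    · obtain ⟨h1, h2, h3, h4, h5⟩ : (j : ℕ) % 2 = 0 ∧ (j : ℕ) / 2 = k + 1 ∧ ((j : ℕ) - 1) % 2 = 1 ∧
          ((j : ℕ) - 1) / 2 = k ∧ 0 < (j : ℕ) := by omega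
      simp only [h1, h2, h3, h4, h5, dite_true, if_true, Nat.one_ne_zero, if_false]
      by_cases hp : (p : ℕ) = n - 1 - k
      · rw [if_pos (by omega), if_pos hp, pow_succ, mul_neg_one, neg_one_mul, neg_neg]
      · rw [if_neg (by omega), if_neg (by omega), if_neg hp, zero_mul]
  · obtain ⟨h1, h2, h3, h4, h5⟩ : (j : ℕ) % 2 = 1 ∧ (j : ℕ) / 2 = k ∧ ((j : ℕ) - 1) % 2 = 0 ∧
        ((j : ℕ) - 1) / 2 = k ∧ 0 < (j : ℕ) := by omega
    simp only [h1, h2, h3, h4, h5, dite_true, if_true, Nat.one_ne_zero, if_false]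
    by_cases hp : (p : ℕ) = n + k
    · rw [if_neg (by omega), if_pos (by omega), if_pos hp, one_mul]
    · rw [if_neg (by omega), if_neg (by omega), if_neg hp, zero_mul]

end NegOmegaMulPmat

theorem stmt14_general {F : Type*} [Field F] (n : ℕ) :
    let N := -(Omega F n * Pmat F n)
    IsNilpotent N ∧ N.rank = 2 * n - 1 ∧
      ∃ S : Matrix (Fin (n + n)) (Fin (n + n)) F, IsUnit S.det ∧
        S⁻¹ * (Matrix.reindex finSumFinEquiv finSumFinEquiv N) * S =
          Matrix.of (fun i j : Fin (n + n) => if (i : ℕ) + 1 = (j : ℕ) then 1 else 0) := by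
  intro N
  have hS : IsUnit (chainBasis F n).det := isUnit_det_of_left_inverse (chainBasis_transpose_mul F n)
  have hchain := reindex_neg_Omega_mul_Pmat_mul_chainBasis F n
  refine ⟨?_, ?_, chainBasis F n, hS, inv_mul_mul_eq_of_mul_eq_mul hS hchain⟩
  · rw [← IsNilpotent.map_iff (reindexAlgEquiv F F finSumFinEquiv).injective,
      coe_reindexAlgEquiv]
    exact isNilpotent_of_mul_eq_mul hS hchain ⟨_, nilpotentJordanBlock_pow_self (n + n)⟩
  · rw [← rank_reindex finSumFinEquiv finSumFinEquiv, rank_eq_of_mul_eq_mul hS hchain,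
      rank_nilpotentJordanBlock]
    omega

/-- `-Ω_n P_n` is nilpotent of rank `2n - 1`, hence similar to the single
Jordan block `J_{2n}(0)`. -/
theorem stmt14 {F : Type*} [Field F] (h2 : (2 : F) ≠ 0) (n : ℕ) :
    let N := -(Omega F n * Pmat F n)
    IsNilpotent N ∧ N.rank = 2 * n - 1 ∧
      ∃ S : Matrix (Fin (n + n)) (Fin (n + n)) F, IsUnit S.det ∧
        S⁻¹ * (Matrix.reindex finSumFinEquiv finSumFinEquiv N) * S =
          Matrix.of (fun i j : Fin (n + n) => if (i : ℕ) + 1 = (j : ℕ) then 1 else 0) :=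
  stmt14_general n
end
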